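/- arXiv:1209.2999 — 5 statements merged into one kernel-verified Lean document; each statement's English description precedes it below -/
import Mathlib

section
/- Let L be a Lie algebra over a field K of characteristic 0, let n ≥ 3, and let r_1,…,r_n ∈ K be pairwise distinct. Suppose C_1,…,C_n ∈ L satisfy [C_i,[C_j,C_k]] = 0 for all pairwise distinct i,j,k, and [C_i,[C_i,C_k]] − [C_j,[C_j,C_k]] = (r_j − r_i)·C_k whenever i ≠ k and j ≠ k. Define Y_q = [C_l,[C_l,C_q]] + r_l·C_q for any l ≠ q (this is independent of the choice of l). Then [C_p, Y_q] = −[C_q, Y_p] for all p, q ∈ {1,…,n}. -/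
/-!
For `p ≠ q` pick `m ∉ {p, q}`. Since `⁅C p, ⁅C m, C q⁆⁆ = 0`, the Leibniz rule gives
`⁅C p, Y q⁆ = ⁅⁅C p, C m⁆, ⁅C m, C q⁆⁆ + r m • ⁅C p, C q⁆`, which is visibly antisymmetric
in `p, q`.

For `p = q` the claim is `T p l = 0` with `T a b = ⁅C a, ⁅C b, ⁅C b, C a⁆⁆⁆`. The Jacobi
identity gives `T a b = -T b a`, and the second relation shows that `T b a` does not depend on
`a ≠ b`. Going around three distinct indices yields `T a b = -T a b`, hence `T a b = 0` in
characteristic zero.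
-/

section LieRing

variable {L : Type*} [LieRing L]

theorem lie_lie_lie_self_eq_neg (x y : L) : ⁅x, ⁅y, ⁅y, x⁆⁆⁆ = -⁅y, ⁅x, ⁅x, y⁆⁆⁆ := by
  rw [leibniz_lie, ← lie_skew y x, lie_neg, lie_self, neg_zero, zero_add, lie_neg, lie_neg]

theorem lie_lie_lie_eq_of_lie_lie_eq_zero {x y z : L} (h : ⁅x, ⁅y, z⁆⁆ = 0) :
    ⁅x, ⁅y, ⁅y, z⁆⁆⁆ = ⁅⁅x, y⁆, ⁅y, z⁆⁆ := by
  rw [leibniz_lie, h, lie_zero, add_zero]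

theorem lie_lie_lie_lie_swap (x y z : L) : ⁅⁅z, y⁆, ⁅y, x⁆⁆ = -⁅⁅x, y⁆, ⁅y, z⁆⁆ := by
  rw [← lie_skew y z, ← lie_skew x y, neg_lie, lie_neg, neg_neg, lie_skew]

end LieRing

section LieAlgebra

variable {K L : Type*} [CommRing K] [LieRing L] [LieAlgebra K L]

theorem lie_lie_lie_add_smul_eq_neg {x y z : L} (c : K) (hx : ⁅x, ⁅y, z⁆⁆ = 0)
    (hz : ⁅z, ⁅y, x⁆⁆ = 0) :
    ⁅x, ⁅y, ⁅y, z⁆⁆ + c • z⁆ = -⁅z, ⁅y, ⁅y, x⁆⁆ + c • x⁆ := by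
  rw [lie_add, lie_add, lie_smul, lie_smul, lie_lie_lie_eq_of_lie_lie_eq_zero hx,
    lie_lie_lie_eq_of_lie_lie_eq_zero hz, lie_lie_lie_lie_swap, ← lie_skew x z, smul_neg, neg_add]

theorem lie_lie_lie_eq_of_sub_eq_smul {x y z : L} {c : K}
    (h : ⁅x, ⁅x, y⁆⁆ - ⁅z, ⁅z, y⁆⁆ = c • y) : ⁅y, ⁅x, ⁅x, y⁆⁆⁆ = ⁅y, ⁅z, ⁅z, y⁆⁆⁆ := by
  rw [← sub_eq_zero, ← lie_sub, h, lie_smul, lie_self, smul_zero]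

theorem lie_lie_lie_eq_zero_of_ne [IsAddTorsionFree L] {ι : Type*} {C : ι → L} (r : ι → K)
    (h : ∀ i j k, i ≠ k → j ≠ k → ⁅C i, ⁅C i, C k⁆⁆ - ⁅C j, ⁅C j, C k⁆⁆ = (r j - r i) • C k)
    {a b c : ι} (hab : a ≠ b) (hbc : b ≠ c) (hac : a ≠ c) :
    ⁅C a, ⁅C b, ⁅C b, C a⁆⁆⁆ = 0 := by
  refine self_eq_neg.mp ?_
  calc ⁅C a, ⁅C b, ⁅C b, C a⁆⁆⁆
      = -⁅C b, ⁅C a, ⁅C a, C b⁆⁆⁆ := lie_lie_lie_self_eq_neg _ _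
    _ = -⁅C b, ⁅C c, ⁅C c, C b⁆⁆⁆ := by rw [lie_lie_lie_eq_of_sub_eq_smul (h a c b hab hbc.symm)]
    _ = ⁅C c, ⁅C b, ⁅C b, C c⁆⁆⁆ := by rw [lie_lie_lie_self_eq_neg, neg_neg]
    _ = ⁅C c, ⁅C a, ⁅C a, C c⁆⁆⁆ := lie_lie_lie_eq_of_sub_eq_smul (h b a c hbc hac)
    _ = -⁅C a, ⁅C c, ⁅C c, C a⁆⁆⁆ := lie_lie_lie_self_eq_neg _ _
    _ = -⁅C a, ⁅C b, ⁅C b, C a⁆⁆⁆ := by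
      rw [lie_lie_lie_eq_of_sub_eq_smul (h c b a hac.symm hab.symm)]

end LieAlgebra

theorem stmt0_general {K L : Type*} [Field K] [CharZero K] [LieRing L] [LieAlgebra K L]
    (n : ℕ) (hn : 3 ≤ n) (r : Fin n → K)
    (C : Fin n → L)
    (h1 : ∀ i j k : Fin n, i ≠ j → j ≠ k → i ≠ k → ⁅C i, ⁅C j, C k⁆⁆ = 0)
    (h2 : ∀ i j k : Fin n, i ≠ k → j ≠ k →
      ⁅C i, ⁅C i, C k⁆⁆ - ⁅C j, ⁅C j, C k⁆⁆ = (r j - r i) • C k)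
    (Y : Fin n → L)
    (hY : ∀ q l : Fin n, l ≠ q → Y q = ⁅C l, ⁅C l, C q⁆⁆ + r l • C q) :
    ∀ p q : Fin n, ⁅C p, Y q⁆ = -⁅C q, Y p⁆ := by
  have := IsAddTorsionFree.of_isTorsionFree K L
  intro p q
  obtain ⟨m, hmp, hmq⟩ := Fin.exists_ne_and_ne_of_two_lt p q hn
  rcases eq_or_ne p q with rfl | hpq
  · obtain ⟨l, hlp, hlm⟩ := Fin.exists_ne_and_ne_of_two_lt p m hn
    have hT : ⁅C p, ⁅C m, ⁅C m, C p⁆⁆⁆ = 0 :=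
      lie_lie_lie_eq_zero_of_ne r h2 hmp.symm hlm.symm hlp.symm
    rw [hY p m hmp, lie_add, lie_smul, lie_self, smul_zero, add_zero, hT, neg_zero]
  · rw [hY q m hmq, hY p m hmp]
    exact lie_lie_lie_add_smul_eq_neg (r m) (h1 p m q hmp.symm hmq hpq)
      (h1 q m p hmq.symm hmp hpq.symm)

/-- For elements `C 1, …, C n` of a Lie algebra `L` over a field `K` of
characteristic zero satisfying the two families of bracket relations, and `Y q`
defined by `Y q = ⁅C l, ⁅C l, C q⁆⁆ + r l • C q` for any `l ≠ q`, one has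
`⁅C p, Y q⁆ = -⁅C q, Y p⁆` for all `p, q`. -/
theorem stmt0 {K L : Type*} [Field K] [CharZero K] [LieRing L] [LieAlgebra K L]
    (n : ℕ) (hn : 3 ≤ n) (r : Fin n → K) (hr : Function.Injective r)
    (C : Fin n → L)
    (h1 : ∀ i j k : Fin n, i ≠ j → j ≠ k → i ≠ k → ⁅C i, ⁅C j, C k⁆⁆ = 0)
    (h2 : ∀ i j k : Fin n, i ≠ k → j ≠ k →
      ⁅C i, ⁅C i, C k⁆⁆ - ⁅C j, ⁅C j, C k⁆⁆ = (r j - r i) • C k)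
    (Y : Fin n → L)
    (hY : ∀ q l : Fin n, l ≠ q → Y q = ⁅C l, ⁅C l, C q⁆⁆ + r l • C q) :
    ∀ p q : Fin n, ⁅C p, Y q⁆ = -⁅C q, Y p⁆ :=
  stmt0_general n hn r C h1 h2 Y hY
end

section
/- Let E_{a,b} denote the (n+1)×(n+1) matrix units over a commutative ring Q containing distinguished elements λ̂_1,…,λ̂_n, λ̂ with λ̂ = λ̂_i² + r_i for all i. Define, for k ≥ 1, Q_i^{2k−1} = (E_{i,n+1}+E_{n+1,i}) ⊗ λ̂^{k−1} λ̂_i and Q_{ij}^{2k} = (E_{i,j}−E_{j,i}) ⊗ λ̂^{k−1} λ̂_i λ̂_j in so_{n,1} ⊗ Q. Then [Q_i^{2k_1−1}, Q_j^{2k_2−1}] = Q_{ij}^{2(k_1+k_2−1)} for i ≠ j, and [Q_i^{2k_1−1}, Q_i^{2k_2−1}] = 0. -/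
open MvPolynomial Matrix

theorem Matrix.lie_smul_smul {R m : Type*} [CommRing R] [Fintype m] [DecidableEq m] (c d : R)
    (A B : Matrix m m R) : ⁅c • A, d • B⁆ = (c * d) • ⁅A, B⁆ := by
  rw [Ring.lie_def, Ring.lie_def, Matrix.smul_mul, Matrix.smul_mul, Matrix.mul_smul,
    Matrix.mul_smul, smul_smul, smul_smul, mul_comm d, smul_sub]

/-- Of the eight products of matrix units, only `E_{a,p} E_{p,b}` and `E_{b,p} E_{p,a}` are
nonzero. -/
theorem Matrix.lie_single_add_single_of_ne {R m : Type*} [CommRing R] [Fintype m] [DecidableEq m]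
    {a b p : m} (hab : a ≠ b) (hap : a ≠ p) (hbp : b ≠ p) :
    ⁅single a p (1 : R) + single p a 1, single b p (1 : R) + single p b 1⁆
      = single a b (1 : R) - single b a 1 := by
  simp only [Ring.lie_def, add_mul, mul_add, single_mul_single_same, mul_one,
    single_mul_single_of_ne _ _ _ _ hab, single_mul_single_of_ne _ _ _ _ hab.symm,
    single_mul_single_of_ne _ _ _ _ hap, single_mul_single_of_ne _ _ _ _ hap.symm,
    single_mul_single_of_ne _ _ _ _ hbp, single_mul_single_of_ne _ _ _ _ hbp.symm]
  abel

theorem stmt7_general {K : Type*} [RCLike K] (n : ℕ)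
    (I : Ideal (MvPolynomial (Fin n) K))
    (lam : MvPolynomial (Fin n) K ⧸ I)
    (Qodd : Fin n → ℕ → Matrix (Fin (n + 1)) (Fin (n + 1)) (MvPolynomial (Fin n) K ⧸ I))
    (hQodd : ∀ (i : Fin n) (k : ℕ), Qodd i k =
      (lam ^ k * Ideal.Quotient.mk I (X i)) •
        (Matrix.single i.castSucc (Fin.last n) (1 : MvPolynomial (Fin n) K ⧸ I)
          + Matrix.single (Fin.last n) i.castSucc (1 : MvPolynomial (Fin n) K ⧸ I)))
    (Qeven : Fin n → Fin n → ℕ → Matrix (Fin (n + 1)) (Fin (n + 1)) (MvPolynomial (Fin n) K ⧸ I))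
    (hQeven : ∀ (i j : Fin n) (k : ℕ), Qeven i j k =
      (lam ^ k * Ideal.Quotient.mk I (X i) * Ideal.Quotient.mk I (X j)) •
        (Matrix.single i.castSucc j.castSucc (1 : MvPolynomial (Fin n) K ⧸ I)
          - Matrix.single j.castSucc i.castSucc (1 : MvPolynomial (Fin n) K ⧸ I))) :
    (∀ (i j : Fin n) (k₁ k₂ : ℕ), i ≠ j →
      ⁅Qodd i k₁, Qodd j k₂⁆ = Qeven i j (k₁ + k₂)) ∧
    (∀ (i : Fin n) (k₁ k₂ : ℕ), ⁅Qodd i k₁, Qodd i k₂⁆ = 0) := by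
  refine ⟨fun i j k₁ k₂ hij => ?_, fun i k₁ k₂ => ?_⟩
  · rw [hQodd, hQodd, hQeven, lie_smul_smul,
      lie_single_add_single_of_ne ((Fin.castSucc_injective n).ne hij)
        (Fin.castSucc_lt_last i).ne (Fin.castSucc_lt_last j).ne]
    congr 1
    ring
  · rw [hQodd, hQodd, lie_smul_smul, Ring.lie_def, sub_self, smul_zero]

/-- in `so_{n,1} ⊗ Q` (matrices over `Q = K[λ₁,…,λₙ]/(λᵢ²−λⱼ²+rᵢ−rⱼ)`),
with `Q_i^{2k−1} = λ̂^{k−1} λ̂ᵢ • (E_{i,n+1}+E_{n+1,i})` and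
`Q_{ij}^{2k} = λ̂^{k−1} λ̂ᵢ λ̂ⱼ • (E_{i,j}−E_{j,i})`, one has
`[Q_i^{2k₁−1}, Q_j^{2k₂−1}] = Q_{ij}^{2(k₁+k₂−1)}` for `i ≠ j` and
`[Q_i^{2k₁−1}, Q_i^{2k₂−1}] = 0`.  (Superscripts are encoded so that `Qodd i k`
carries `λ̂ᵏ`, i.e. `Qodd i k = Q_i^{2(k+1)−1}`, and `Qeven i j k = Q_{ij}^{2(k+1)}`.) -/
theorem stmt7 {K : Type*} [RCLike K] (n : ℕ) (hn : 2 ≤ n)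
    (r : Fin n → K) (hr : Function.Injective r)
    (I : Ideal (MvPolynomial (Fin n) K))
    (hI : I = Ideal.span {P | ∃ i j : Fin n,
      P = X i ^ 2 - X j ^ 2 + MvPolynomial.C (r i) - MvPolynomial.C (r j)})
    (lam : MvPolynomial (Fin n) K ⧸ I)
    (hlam : ∀ i : Fin n, lam = (Ideal.Quotient.mk I (X i)) ^ 2
      + algebraMap K (MvPolynomial (Fin n) K ⧸ I) (r i))
    (Qodd : Fin n → ℕ → Matrix (Fin (n + 1)) (Fin (n + 1)) (MvPolynomial (Fin n) K ⧸ I))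
    (hQodd : ∀ (i : Fin n) (k : ℕ), Qodd i k =
      (lam ^ k * Ideal.Quotient.mk I (X i)) •
        (Matrix.single i.castSucc (Fin.last n) (1 : MvPolynomial (Fin n) K ⧸ I)
          + Matrix.single (Fin.last n) i.castSucc (1 : MvPolynomial (Fin n) K ⧸ I)))
    (Qeven : Fin n → Fin n → ℕ → Matrix (Fin (n + 1)) (Fin (n + 1)) (MvPolynomial (Fin n) K ⧸ I))
    (hQeven : ∀ (i j : Fin n) (k : ℕ), Qeven i j k =
      (lam ^ k * Ideal.Quotient.mk I (X i) * Ideal.Quotient.mk I (X j)) •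
        (Matrix.single i.castSucc j.castSucc (1 : MvPolynomial (Fin n) K ⧸ I)
          - Matrix.single j.castSucc i.castSucc (1 : MvPolynomial (Fin n) K ⧸ I))) :
    (∀ (i j : Fin n) (k₁ k₂ : ℕ), i ≠ j →
      ⁅Qodd i k₁, Qodd j k₂⁆ = Qeven i j (k₁ + k₂)) ∧
    (∀ (i : Fin n) (k₁ k₂ : ℕ), ⁅Qodd i k₁, Qodd i k₂⁆ = 0) :=
  stmt7_general n I lam Qodd hQodd Qeven hQeven
end

section
/- With the notation of the quasigraded algebra: in so_{n,1} ⊗ Q (Q = K[λ_1,…,λ_n]/(λ_i²−λ_j²+r_i−r_j), λ̂ = λ̂_i²+r_i), defining Q_{ij}^{2k} = (E_{i,j}−E_{j,i}) ⊗ λ̂^{k−1} λ̂_i λ̂_j and Q_l^{2k−1} = (E_{l,n+1}+E_{n+1,l}) ⊗ λ̂^{k−1} λ̂_l, one has for i ≠ j, l arbitrary: [Q_{ij}^{2k_1}, Q_l^{2k_2−1}] = δ_{lj} Q_i^{2k_1+2k_2−1} − δ_{il} Q_j^{2k_1+2k_2−1} − r_j δ_{lj} Q_i^{2k_1+2k_2−3}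 + r_i δ_{il} Q_j^{2k_1+2k_2−3}. -/
/-!
A bracket `⁅a • A, b • B⁆` is `(a * b) • ⁅A, B⁆`, and in `so_{n,1}` one has
`⁅E_{ij} - E_{ji}, E_{l,n+1} + E_{n+1,l}⁆ =
  δ_{lj} (E_{i,n+1} + E_{n+1,i}) - δ_{il} (E_{j,n+1} + E_{n+1,j})`.
The coefficient of a surviving term contains `λ̂_j²` (resp. `λ̂_i²`), and the relation
`λ̂_m² = λ̂ - r_m` of `Q` splits it into the terms of superscripts `2k₁+2k₂-1` and `2k₁+2k₂-3`.
-/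

open MvPolynomial Matrix

theorem Ring.smul_lie_smul {R A : Type*} [CommRing R] [Ring A] [Algebra R A] (a b : R) (x y : A) :
    ⁅a • x, b • y⁆ = (a * b) • ⁅x, y⁆ := by
  rw [Ring.lie_def, Ring.lie_def, smul_mul_smul, smul_mul_smul, mul_comm b a, smul_sub]

theorem Matrix.lie_single_sub_single_single_add_single {ι R : Type*} [DecidableEq ι] [Fintype ι]
    [CommRing R] {a b c d : ι} (had : a ≠ d) (hbd : b ≠ d) :
    ⁅single a b (1 : R) - single b a 1, single c d (1 : R) + single d c 1⁆ =
      (if c = b then single a d (1 : R) + single d a 1 else 0)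
        - (if a = c then single b d (1 : R) + single d b 1 else 0) := by
  rw [Ring.lie_def]
  split_ifs <;> subst_vars <;>
    simp [Matrix.mul_add, Matrix.add_mul, Matrix.sub_mul, Matrix.mul_sub,
      single_mul_single_of_ne, Ne.symm, *]
  abel

namespace Lorentz

variable {K R : Type*} [CommRing K] [CommRing R] [Algebra K R] {n : ℕ}

variable (R) in
def rotation (i j : Fin n) : Matrix (Fin (n + 1)) (Fin (n + 1)) R :=
  single i.castSucc j.castSucc 1 - single j.castSucc i.castSucc 1

variable (R) in
def boost (l : Fin n) : Matrix (Fin (n + 1)) (Fin (n + 1)) R :=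
  single l.castSucc (Fin.last n) 1 + single (Fin.last n) l.castSucc 1

theorem lie_rotation_boost (i j l : Fin n) :
    ⁅rotation R i j, boost R l⁆ =
      (if l = j then boost R i else 0) - (if i = l then boost R j else 0) := by
  simpa only [rotation, boost, Fin.castSucc_inj] using
    lie_single_sub_single_single_add_single (R := R) (c := l.castSucc)
      (Fin.castSucc_lt_last i).ne (Fin.castSucc_lt_last j).ne

/- With `lam = λ̂` and `x m = λ̂_m`, `Qeven lam x i j k` is the paper's `Q_{ij}^{2k+2}` and
`Qodd lam x l k` is `Q_l^{2k+1}`. -/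
def Qeven (lam : R) (x : Fin n → R) (i j : Fin n) (k : ℕ) :
    Matrix (Fin (n + 1)) (Fin (n + 1)) R :=
  (lam ^ k * x i * x j) • rotation R i j

def Qodd (lam : R) (x : Fin n → R) (l : Fin n) (k : ℕ) : Matrix (Fin (n + 1)) (Fin (n + 1)) R :=
  (lam ^ k * x l) • boost R l

theorem lie_Qeven_Qodd {lam : R} {x : Fin n → R} {r : Fin n → K}
    (hx : ∀ m, x m * x m = lam - algebraMap K R (r m)) {i j : Fin n} (hij : i ≠ j) (l : Fin n)
    (k₁ k₂ : ℕ) :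
    ⁅Qeven lam x i j k₁, Qodd lam x l k₂⁆ =
      (if l = j then Qodd lam x i (k₁ + k₂ + 1) else 0)
        - (if i = l then Qodd lam x j (k₁ + k₂ + 1) else 0)
        - (if l = j then r j • Qodd lam x i (k₁ + k₂) else 0)
        + (if i = l then r i • Qodd lam x j (k₁ + k₂) else 0) := by
  simp only [Qeven, Qodd, Ring.smul_lie_smul, lie_rotation_boost]
  by_cases hlj : l = j
  · subst hlj
    simp only [if_pos, if_neg hij, sub_zero, add_zero]
    linear_combination (norm := module) (lam ^ (k₁ + k₂) * x i * hx l) • boost R i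
  by_cases hil : i = l
  · subst hil
    simp only [if_pos, if_neg hlj, zero_sub, sub_zero]
    linear_combination (norm := module) (-(lam ^ (k₁ + k₂) * x j) * hx i) • boost R j
  · simp only [if_neg hlj, if_neg hil, smul_zero, sub_zero, add_zero]

end Lorentz

theorem stmt8_general {K : Type*} [RCLike K] (n : ℕ) (r : Fin n → K)
    (I : Ideal (MvPolynomial (Fin n) K))
    (lam : MvPolynomial (Fin n) K ⧸ I)
    (hlam : ∀ i : Fin n, lam = (Ideal.Quotient.mk I (X i)) ^ 2
      + algebraMap K (MvPolynomial (Fin n) K ⧸ I) (r i))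
    (Qodd : Fin n → ℕ → Matrix (Fin (n + 1)) (Fin (n + 1)) (MvPolynomial (Fin n) K ⧸ I))
    (hQodd : ∀ (l : Fin n) (k : ℕ), Qodd l k =
      (lam ^ k * Ideal.Quotient.mk I (X l)) •
        (Matrix.single l.castSucc (Fin.last n) (1 : MvPolynomial (Fin n) K ⧸ I)
          + Matrix.single (Fin.last n) l.castSucc (1 : MvPolynomial (Fin n) K ⧸ I)))
    (Qeven : Fin n → Fin n → ℕ → Matrix (Fin (n + 1)) (Fin (n + 1)) (MvPolynomial (Fin n) K ⧸ I))
    (hQeven : ∀ (i j : Fin n) (k : ℕ), Qeven i j k =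
      (lam ^ k * Ideal.Quotient.mk I (X i) * Ideal.Quotient.mk I (X j)) •
        (Matrix.single i.castSucc j.castSucc (1 : MvPolynomial (Fin n) K ⧸ I)
          - Matrix.single j.castSucc i.castSucc (1 : MvPolynomial (Fin n) K ⧸ I))) :
    ∀ (i j l : Fin n) (k₁ k₂ : ℕ), i ≠ j →
      ⁅Qeven i j k₁, Qodd l k₂⁆ =
        (if l = j then Qodd i (k₁ + k₂ + 1) else 0)
        - (if i = l then Qodd j (k₁ + k₂ + 1) else 0)
        - (if l = j then r j • Qodd i (k₁ + k₂) else 0)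
        + (if i = l then r i • Qodd j (k₁ + k₂) else 0) := by
  have hodd : Qodd = Lorentz.Qodd lam (fun m => Ideal.Quotient.mk I (X m)) := funext₂ hQodd
  have heven : Qeven = Lorentz.Qeven lam (fun m => Ideal.Quotient.mk I (X m)) := funext₃ hQeven
  subst hodd heven
  intro i j l k₁ k₂ hij
  exact Lorentz.lie_Qeven_Qodd (fun m => by rw [hlam m]; ring) hij l k₁ k₂

/-- in `so_{n,1} ⊗ Q`, with `Q_{ij}^{2k} = λ̂^{k−1} λ̂ᵢ λ̂ⱼ • (E_{i,j}−E_{j,i})`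
and `Q_l^{2k−1} = λ̂^{k−1} λ̂_l • (E_{l,n+1}+E_{n+1,l})`, for `i ≠ j` one has
`[Q_{ij}^{2k₁}, Q_l^{2k₂−1}] = δ_{lj} Q_i^{2k₁+2k₂−1} − δ_{il} Q_j^{2k₁+2k₂−1}
 − r_j δ_{lj} Q_i^{2k₁+2k₂−3} + r_i δ_{il} Q_j^{2k₁+2k₂−3}`.
(`Qeven i j k = Q_{ij}^{2(k+1)}`, `Qodd l k = Q_l^{2(k+1)−1}`, so the right-hand
superscripts `2k₁+2k₂+3` and `2k₁+2k₂+1` correspond to indices `k₁+k₂+1` and `k₁+k₂`.) -/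
theorem stmt8 {K : Type*} [RCLike K] (n : ℕ) (hn : 2 ≤ n)
    (r : Fin n → K) (hr : Function.Injective r)
    (I : Ideal (MvPolynomial (Fin n) K))
    (hI : I = Ideal.span {P | ∃ i j : Fin n,
      P = X i ^ 2 - X j ^ 2 + MvPolynomial.C (r i) - MvPolynomial.C (r j)})
    (lam : MvPolynomial (Fin n) K ⧸ I)
    (hlam : ∀ i : Fin n, lam = (Ideal.Quotient.mk I (X i)) ^ 2
      + algebraMap K (MvPolynomial (Fin n) K ⧸ I) (r i))
    (Qodd : Fin n → ℕ → Matrix (Fin (n + 1)) (Fin (n + 1)) (MvPolynomial (Fin n) K ⧸ I))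
    (hQodd : ∀ (l : Fin n) (k : ℕ), Qodd l k =
      (lam ^ k * Ideal.Quotient.mk I (X l)) •
        (Matrix.single l.castSucc (Fin.last n) (1 : MvPolynomial (Fin n) K ⧸ I)
          + Matrix.single (Fin.last n) l.castSucc (1 : MvPolynomial (Fin n) K ⧸ I)))
    (Qeven : Fin n → Fin n → ℕ → Matrix (Fin (n + 1)) (Fin (n + 1)) (MvPolynomial (Fin n) K ⧸ I))
    (hQeven : ∀ (i j : Fin n) (k : ℕ), Qeven i j k =
      (lam ^ k * Ideal.Quotient.mk I (X i) * Ideal.Quotient.mk I (X j)) •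
        (Matrix.single i.castSucc j.castSucc (1 : MvPolynomial (Fin n) K ⧸ I)
          - Matrix.single j.castSucc i.castSucc (1 : MvPolynomial (Fin n) K ⧸ I))) :
    ∀ (i j l : Fin n) (k₁ k₂ : ℕ), i ≠ j →
      ⁅Qeven i j k₁, Qodd l k₂⁆ =
        (if l = j then Qodd i (k₁ + k₂ + 1) else 0)
        - (if i = l then Qodd j (k₁ + k₂ + 1) else 0)
        - (if l = j then r j • Qodd i (k₁ + k₂) else 0)
        + (if i = l then r i • Qodd j (k₁ + k₂) else 0) :=
  stmt8_general n r I lam hlam Qodd hQodd Qeven hQeven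
end

section
/- Define Q_i = (E_{i,n+1}+E_{n+1,i}) ⊗ λ̂_i in so_{n,1} ⊗ Q, where Q = K[λ_1,…,λ_n]/(λ_i²−λ_j²+r_i−r_j). Then the elements Q_1,…,Q_n satisfy the defining relations of g(n): [Q_i,[Q_j,Q_k]] = 0 for pairwise distinct i,j,k, and [Q_i,[Q_i,Q_k]] − [Q_j,[Q_j,Q_k]] = (r_j − r_i)·Q_k for i ≠ k, j ≠ k. -/
open MvPolynomial Matrix

/-! Writing `Bₐ = E_{a,o} + E_{o,a}` for the boosts and `R_{ab} = E_{a,b} - E_{b,a}` for the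
rotations of `so_{n,1}`, one has `[B_a, B_b] = R_{ab}`, `[B_a, R_{ab}] = B_b` and
`[B_a, R_{bc}] = 0` for `a ∉ {b, c}`. Since `Qᵢ = λ̂ᵢ Bᵢ`, this gives `[Qᵢ,[Qⱼ,Q_k]] = 0` and
`[Qᵢ,[Qᵢ,Q_k]] = λ̂ᵢ² λ̂_k B_k`, and the relation `λ̂ᵢ² - λ̂ⱼ² = rⱼ - rᵢ` in `Q` finishes. -/

namespace Matrix

variable {m R : Type*} [DecidableEq m] [Fintype m] [CommRing R]

def boost (a o : m) : Matrix m m R := single a o (1 : R) + single o a 1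

def rotation (a b : m) : Matrix m m R := single a b (1 : R) - single b a 1

theorem smul_lie_smul (s t : R) (M N : Matrix m m R) : ⁅s • M, t • N⁆ = (s * t) • ⁅M, N⁆ := by
  rw [Ring.lie_def, Ring.lie_def, smul_mul_smul_comm, smul_mul_smul_comm, mul_comm t, smul_sub]

variable {a b c o : m}

theorem boost_lie_boost (hab : a ≠ b) (ha : a ≠ o) (hb : b ≠ o) :
    ⁅(boost a o : Matrix m m R), boost b o⁆ = (rotation a b : Matrix m m R) := by
  simp [boost, rotation, Ring.lie_def, Matrix.add_mul, Matrix.mul_add, single_mul_single_same,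
    single_mul_single_of_ne, hab, ha, hb, hab.symm, ha.symm, hb.symm]

theorem boost_lie_rotation_self (hab : a ≠ b) (ha : a ≠ o) (hb : b ≠ o) :
    ⁅(boost a o : Matrix m m R), rotation a b⁆ = (boost b o : Matrix m m R) := by
  simp [boost, rotation, Ring.lie_def, Matrix.add_mul, Matrix.mul_add, Matrix.sub_mul,
    Matrix.mul_sub, single_mul_single_same, single_mul_single_of_ne, hab, ha, hb, hab.symm,
    ha.symm, hb.symm]
  abel

theorem boost_lie_rotation_of_ne (hab : a ≠ b) (hac : a ≠ c) (hb : b ≠ o) (hc : c ≠ o) :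
    ⁅(boost a o : Matrix m m R), rotation b c⁆ = (0 : Matrix m m R) := by
  simp [boost, rotation, Ring.lie_def, Matrix.add_mul, Matrix.mul_add, Matrix.sub_mul,
    Matrix.mul_sub, single_mul_single_of_ne, hab, hac, hb, hc,
    hab.symm, hac.symm, hb.symm, hc.symm]

end Matrix

theorem Ideal.Quotient.mk_X_sq_sub_mk_X_sq {σ R : Type*} [CommRing R]
    {I : Ideal (MvPolynomial σ R)} {i j : σ} {r s : R} (h : X i ^ 2 - X j ^ 2 + C r - C s ∈ I) :
    mk I (X i) ^ 2 - mk I (X j) ^ 2 = algebraMap R (MvPolynomial σ R ⧸ I) (s - r) := by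
  have h0 := Ideal.Quotient.eq_zero_iff_mem.mpr h
  simp only [map_sub, map_add, map_pow] at h0
  rw [map_sub]
  change _ = mk I (C s) - mk I (C r)
  linear_combination h0

theorem stmt9_general {K : Type*} [RCLike K] (n : ℕ)
    (r : Fin n → K)
    (I : Ideal (MvPolynomial (Fin n) K))
    (hI : I = Ideal.span {P | ∃ i j : Fin n,
      P = X i ^ 2 - X j ^ 2 + MvPolynomial.C (r i) - MvPolynomial.C (r j)})
    (Q : Fin n → Matrix (Fin (n + 1)) (Fin (n + 1)) (MvPolynomial (Fin n) K ⧸ I))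
    (hQ : ∀ i : Fin n, Q i = Ideal.Quotient.mk I (X i) •
      (Matrix.single i.castSucc (Fin.last n) (1 : MvPolynomial (Fin n) K ⧸ I)
        + Matrix.single (Fin.last n) i.castSucc (1 : MvPolynomial (Fin n) K ⧸ I))) :
    (∀ i j k : Fin n, i ≠ j → j ≠ k → i ≠ k → ⁅Q i, ⁅Q j, Q k⁆⁆ = 0) ∧
    (∀ i j k : Fin n, i ≠ k → j ≠ k →
      ⁅Q i, ⁅Q i, Q k⁆⁆ - ⁅Q j, ⁅Q j, Q k⁆⁆ = (r j - r i) • Q k) := by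
  set x : Fin n → MvPolynomial (Fin n) K ⧸ I := fun i => Ideal.Quotient.mk I (X i)
  have hQ' (i : Fin n) : Q i = x i • boost i.castSucc (Fin.last n) := hQ i
  have hlast (i : Fin n) : i.castSucc ≠ Fin.last n := (Fin.castSucc_lt_last i).ne
  have hcast {i j : Fin n} (h : i ≠ j) : i.castSucc ≠ j.castSucc := (Fin.castSucc_injective n).ne h
  have hdouble {i k : Fin n} (hik : i ≠ k) :
      ⁅Q i, ⁅Q i, Q k⁆⁆ = (x i ^ 2 * x k) • boost k.castSucc (Fin.last n) := by
    rw [hQ' i, hQ' k, smul_lie_smul, smul_lie_smul,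
      boost_lie_boost (hcast hik) (hlast i) (hlast k),
      boost_lie_rotation_self (hcast hik) (hlast i) (hlast k)]
    rw [← mul_assoc, ← sq]
  refine ⟨fun i j k hij hjk hik => ?_, fun i j k hik hjk => ?_⟩
  · rw [hQ' i, hQ' j, hQ' k, smul_lie_smul, smul_lie_smul,
      boost_lie_boost (hcast hjk) (hlast j) (hlast k),
      boost_lie_rotation_of_ne (hcast hij) (hcast hik) (hlast j) (hlast k), smul_zero]
  · have hrel : x i ^ 2 - x j ^ 2 = algebraMap K _ (r j - r i) :=
      Ideal.Quotient.mk_X_sq_sub_mk_X_sq (hI ▸ Ideal.subset_span ⟨i, j, rfl⟩)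
    rw [hdouble hik, hdouble hjk, hQ' k, ← smul_assoc, (Algebra.smul_def (r j - r i) (x k) :),
      ← hrel, sub_mul, sub_smul]

/-- the elements `Qᵢ = λ̂ᵢ • (E_{i,n+1} + E_{n+1,i})` of
`so_{n,1} ⊗ Q` (realized as matrices over `Q = K[λ₁,…,λₙ]/(λᵢ²−λⱼ²+rᵢ−rⱼ)`)
satisfy the defining relations of `g(n)`. -/
theorem stmt9 {K : Type*} [RCLike K] (n : ℕ) (hn : 3 ≤ n)
    (r : Fin n → K) (hr : Function.Injective r)
    (I : Ideal (MvPolynomial (Fin n) K))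
    (hI : I = Ideal.span {P | ∃ i j : Fin n,
      P = X i ^ 2 - X j ^ 2 + MvPolynomial.C (r i) - MvPolynomial.C (r j)})
    (Q : Fin n → Matrix (Fin (n + 1)) (Fin (n + 1)) (MvPolynomial (Fin n) K ⧸ I))
    (hQ : ∀ i : Fin n, Q i = Ideal.Quotient.mk I (X i) •
      (Matrix.single i.castSucc (Fin.last n) (1 : MvPolynomial (Fin n) K ⧸ I)
        + Matrix.single (Fin.last n) i.castSucc (1 : MvPolynomial (Fin n) K ⧸ I))) :
    (∀ i j k : Fin n, i ≠ j → j ≠ k → i ≠ k → ⁅Q i, ⁅Q j, Q k⁆⁆ = 0) ∧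
    (∀ i j k : Fin n, i ≠ k → j ≠ k →
      ⁅Q i, ⁅Q i, Q k⁆⁆ - ⁅Q j, ⁅Q j, Q k⁆⁆ = (r j - r i) • Q k) :=
  stmt9_general n r I hI Q hQ
end

section
/- In the tensor Lie algebra so_{n,1} ⊗ Q with Q = K[λ_1,…,λ_n]/(λ_i²−λ_j²+r_i−r_j) and λ̂ = λ̂_i²+r_i, for i,j,l,m ∈ {1,…,n} and k_1,k_2 ≥ 1, the elements Q_{ij}^{2k} = (E_{i,j}−E_{j,i})⊗λ̂^{k−1}λ̂_iλ̂_j satisfy [Q_{ij}^{2k_1}, Q_{lm}^{2k_2}] = δ_{lj} Q_{im}^{2(k_1+k_2)} − δ_{im} Q_{lj}^{2(k_1+k_2)} + δ_{jm} Q_{li}^{2(k_1+k_2)} − δ_{il} Q_{jm}^{2(k_1+k_2)} + r_i δ_{im} Q_{lj}^{2(k_1+k_2−1)} − r_j δ_{lj} Q_{im}^{2(k_1+k_2−1)} + r_i δ_{il} Q_{jm}^{2(k_1+k_2−1)} − r_j δ_{jm} Q_{li}^{2(k_1+k_2−1)}. -/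
open MvPolynomial Matrix

/-! `Q_{ij}^{2(k+1)}` is the rotation generator `E_{ij} - E_{ji}` scaled by `λ̂^k λ̂_i λ̂_j`, so
the bracket of two of them is the product of the scalars times the `so_n` commutator
`[E_{ij} - E_{ji}, E_{lm} - E_{ml}]`. Each of its four terms has a scalar of the form
`λ̂^k λ̂_a λ̂_b λ̂_p²`, and the relation `λ̂_p² = λ̂ - r_p` splits it into a term of the
next degree and `r_p` times a term of the current one. -/

namespace Matrix

variable {κ R : Type*} [Fintype κ] [DecidableEq κ] [CommRing R]

variable (R) in
def skewSingle (a b : κ) : Matrix κ κ R := single a b 1 - single b a 1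

theorem single_one_mul_single_one (p q s t : κ) :
    single p q (1 : R) * single s t 1 = if q = s then single p t 1 else 0 := by
  split_ifs with h
  · subst h
    simp
  · exact single_mul_single_of_ne (c := (1 : R)) p q s h 1

theorem lie_skewSingle (a b c d : κ) :
    ⁅skewSingle R a b, skewSingle R c d⁆ =
      (if c = b then skewSingle R a d else 0) - (if a = d then skewSingle R c b else 0)
        + (if b = d then skewSingle R c a else 0) - (if a = c then skewSingle R b d else 0) := by
  rw [Ring.lie_def]
  simp only [skewSingle, sub_mul, mul_sub, single_one_mul_single_one]
  by_cases h1 : c = b <;> by_cases h2 : a = d <;> by_cases h3 : b = d <;> by_cases h4 : a = c <;>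
    simp_all [eq_comm] <;> abel

theorem smul_lie_smul_s14 (c d : R) (A B : Matrix κ κ R) : ⁅c • A, d • B⁆ = (c * d) • ⁅A, B⁆ := by
  rw [Ring.lie_def, Ring.lie_def, smul_mul_smul_comm, smul_mul_smul_comm, mul_comm d c,
    smul_sub]

end Matrix

section EvenGenerators

variable {ι κ K R : Type*} [DecidableEq κ] [CommRing K] [CommRing R] [Algebra K R]
  (e : ι → κ) (x : ι → R) (lam : R)

def evenGenerator (i j : ι) (k : ℕ) : Matrix κ κ R :=
  (lam ^ k * x i * x j) • skewSingle R (e i) (e j)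

variable {e x lam}

theorem ite_smul_skewSingle_eq {r : ι → K} {p a b : ι}
    (hlam : lam = x p ^ 2 + algebraMap K R (r p))
    (P : Prop) [Decidable P] {c : R} (k : ℕ) (hc : P → c = lam ^ k * x a * x b * x p ^ 2) :
    (if P then c • skewSingle R (e a) (e b) else 0) =
      (if P then evenGenerator e x lam a b (k + 1) else 0)
        - (if P then r p • evenGenerator e x lam a b k else 0) := by
  split_ifs with h
  · have hcoef :
        c = lam ^ (k + 1) * x a * x b - algebraMap K R (r p) * (lam ^ k * x a * x b) := by
      rw [hc h]
      linear_combination (-(lam ^ k * x a * x b)) * hlam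
    rw [hcoef, sub_smul, mul_smul (algebraMap K R (r p)), algebraMap_smul, evenGenerator,
      evenGenerator]
  · rw [sub_zero]

theorem lie_evenGenerator [DecidableEq ι] [Fintype κ] (he : Function.Injective e) (r : ι → K)
    (hlam : ∀ i, lam = x i ^ 2 + algebraMap K R (r i)) (i j l m : ι) (k₁ k₂ : ℕ) :
    ⁅evenGenerator e x lam i j k₁, evenGenerator e x lam l m k₂⁆ =
      (if l = j then evenGenerator e x lam i m (k₁ + k₂ + 1) else 0)
      - (if i = m then evenGenerator e x lam l j (k₁ + k₂ + 1) else 0)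
      + (if j = m then evenGenerator e x lam l i (k₁ + k₂ + 1) else 0)
      - (if i = l then evenGenerator e x lam j m (k₁ + k₂ + 1) else 0)
      + (if i = m then r i • evenGenerator e x lam l j (k₁ + k₂) else 0)
      - (if l = j then r j • evenGenerator e x lam i m (k₁ + k₂) else 0)
      + (if i = l then r i • evenGenerator e x lam j m (k₁ + k₂) else 0)
      - (if j = m then r j • evenGenerator e x lam l i (k₁ + k₂) else 0) := by
  rw [evenGenerator, evenGenerator, smul_lie_smul_s14, lie_skewSingle]
  simp only [he.eq_iff, smul_sub, smul_add, smul_ite, smul_zero]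
  rw [ite_smul_skewSingle_eq (hlam j) _ (k₁ + k₂) (by rintro rfl; ring),
    ite_smul_skewSingle_eq (hlam i) _ (k₁ + k₂) (by rintro rfl; ring),
    ite_smul_skewSingle_eq (hlam j) _ (k₁ + k₂) (by rintro rfl; ring),
    ite_smul_skewSingle_eq (hlam i) _ (k₁ + k₂) (by rintro rfl; ring)]
  abel

end EvenGenerators

theorem stmt14_general {K : Type*} [RCLike K] (n : ℕ)
    (r : Fin n → K)
    (I : Ideal (MvPolynomial (Fin n) K))
    (lam : MvPolynomial (Fin n) K ⧸ I)
    (hlam : ∀ i : Fin n, lam = (Ideal.Quotient.mk I (X i)) ^ 2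
      + algebraMap K (MvPolynomial (Fin n) K ⧸ I) (r i))
    (Qeven : Fin n → Fin n → ℕ → Matrix (Fin (n + 1)) (Fin (n + 1)) (MvPolynomial (Fin n) K ⧸ I))
    (hQeven : ∀ (i j : Fin n) (k : ℕ), Qeven i j k =
      (lam ^ k * Ideal.Quotient.mk I (X i) * Ideal.Quotient.mk I (X j)) •
        (Matrix.single i.castSucc j.castSucc (1 : MvPolynomial (Fin n) K ⧸ I)
          - Matrix.single j.castSucc i.castSucc (1 : MvPolynomial (Fin n) K ⧸ I))) :
    ∀ (i j l m : Fin n) (k₁ k₂ : ℕ),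
      ⁅Qeven i j k₁, Qeven l m k₂⁆ =
        (if l = j then Qeven i m (k₁ + k₂ + 1) else 0)
        - (if i = m then Qeven l j (k₁ + k₂ + 1) else 0)
        + (if j = m then Qeven l i (k₁ + k₂ + 1) else 0)
        - (if i = l then Qeven j m (k₁ + k₂ + 1) else 0)
        + (if i = m then r i • Qeven l j (k₁ + k₂) else 0)
        - (if l = j then r j • Qeven i m (k₁ + k₂) else 0)
        + (if i = l then r i • Qeven j m (k₁ + k₂) else 0)
        - (if j = m then r j • Qeven l i (k₁ + k₂) else 0) := by
  have hQ : Qeven = evenGenerator Fin.castSucc (fun i => Ideal.Quotient.mk I (X i)) lam := by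
    funext i j k
    exact hQeven i j k
  subst hQ
  exact lie_evenGenerator (Fin.castSucc_injective n) r hlam

/-- in `so_{n,1} ⊗ Q`, the elements
`Q_{ij}^{2k} = λ̂^{k−1} λ̂ᵢ λ̂ⱼ • (E_{i,j}−E_{j,i})` satisfy
`[Q_{ij}^{2k₁}, Q_{lm}^{2k₂}] = δ_{lj} Q_{im}^{2(k₁+k₂)} − δ_{im} Q_{lj}^{2(k₁+k₂)}
 + δ_{jm} Q_{li}^{2(k₁+k₂)} − δ_{il} Q_{jm}^{2(k₁+k₂)}
 + rᵢ δ_{im} Q_{lj}^{2(k₁+k₂−1)} − rⱼ δ_{lj} Q_{im}^{2(k₁+k₂−1)}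
 + rᵢ δ_{il} Q_{jm}^{2(k₁+k₂−1)} − rⱼ δ_{jm} Q_{li}^{2(k₁+k₂−1)}`.
(Encoding: `Qeven i j k = Q_{ij}^{2(k+1)}`, so superscripts `2(k₁+k₂+2)` and
`2(k₁+k₂+1)` correspond to indices `k₁+k₂+1` and `k₁+k₂`.) -/
theorem stmt14 {K : Type*} [RCLike K] (n : ℕ) (hn : 2 ≤ n)
    (r : Fin n → K) (hr : Function.Injective r)
    (I : Ideal (MvPolynomial (Fin n) K))
    (hI : I = Ideal.span {P | ∃ i j : Fin n,
      P = X i ^ 2 - X j ^ 2 + MvPolynomial.C (r i) - MvPolynomial.C (r j)})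
    (lam : MvPolynomial (Fin n) K ⧸ I)
    (hlam : ∀ i : Fin n, lam = (Ideal.Quotient.mk I (X i)) ^ 2
      + algebraMap K (MvPolynomial (Fin n) K ⧸ I) (r i))
    (Qeven : Fin n → Fin n → ℕ → Matrix (Fin (n + 1)) (Fin (n + 1)) (MvPolynomial (Fin n) K ⧸ I))
    (hQeven : ∀ (i j : Fin n) (k : ℕ), Qeven i j k =
      (lam ^ k * Ideal.Quotient.mk I (X i) * Ideal.Quotient.mk I (X j)) •
        (Matrix.single i.castSucc j.castSucc (1 : MvPolynomial (Fin n) K ⧸ I)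
          - Matrix.single j.castSucc i.castSucc (1 : MvPolynomial (Fin n) K ⧸ I))) :
    ∀ (i j l m : Fin n) (k₁ k₂ : ℕ),
      ⁅Qeven i j k₁, Qeven l m k₂⁆ =
        (if l = j then Qeven i m (k₁ + k₂ + 1) else 0)
        - (if i = m then Qeven l j (k₁ + k₂ + 1) else 0)
        + (if j = m then Qeven l i (k₁ + k₂ + 1) else 0)
        - (if i = l then Qeven j m (k₁ + k₂ + 1) else 0)
        + (if i = m then r i • Qeven l j (k₁ + k₂) else 0)
        - (if l = j then r j • Qeven i m (k₁ + k₂) else 0)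
        + (if i = l then r i • Qeven j m (k₁ + k₂) else 0)
        - (if j = m then r j • Qeven l i (k₁ + k₂) else 0) :=
  stmt14_general n r I lam hlam Qeven hQeven
end
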